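/- arXiv:1802.06570 — 2 statements merged into one kernel-verified Lean document; each statement's English description precedes it below -/
import Mathlib

section
/- Let A ∈ SL(2,Z) define the second-factor dynamics, and define f_N : T^2 × T^2 → T^2 × T^2 by f_N(x,y,z,w) = (s_N(x,y) + P_x(A^N(z,w)), A^{2N}(z,w)), where P_x is projection onto the first coordinate. Then the inverse map f_N^{-1} is conjugated by the involution I(x,y,z,w) = (y,x,z,w) to the map (x,y,z,w) ↦ (s_N(x,y) + P_x(A^{-N}(z,w)), A^{-2N}(z,w)). -/
noncomputable section

/-- The circle `ℝ/2πℤ`. -/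
abbrev Torus1 : Type := AddCircle (2 * Real.pi)

/-- `sin` descends to the circle `ℝ/2πℤ`. -/
noncomputable def sinT : Torus1 → ℝ := Real.sin_periodic.lift

/-- The standard map `s_N(x,y) = (2x - y + N sin x, x)` on the 2-torus. -/
noncomputable def stdMap (N : ℝ) (p : Torus1 × Torus1) : Torus1 × Torus1 :=
  ((2 : ℤ) • p.1 - p.2 + ((N * sinT p.1 : ℝ) : Torus1), p.1)

/-- The action of an integer matrix on the 2-torus. -/
def matAct (B : Matrix (Fin 2) (Fin 2) ℤ) (p : Torus1 × Torus1) : Torus1 × Torus1 :=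
  (B 0 0 • p.1 + B 0 1 • p.2, B 1 0 • p.1 + B 1 1 • p.2)

/-- The projection `P_x(a,b) = (a,0)` on the 2-torus. -/
def Px (p : Torus1 × Torus1) : Torus1 × Torus1 := (p.1, 0)

/-- The Berger–Carrasco map
`f_N(x,y,z,w) = (s_N(x,y) + P_x(A^N(z,w)), A^{2N}(z,w))` on `T⁴ = T² × T²`. -/
noncomputable def fBC (N : ℕ) (A : Matrix.SpecialLinearGroup (Fin 2) ℤ)
    (m : (Torus1 × Torus1) × (Torus1 × Torus1)) : (Torus1 × Torus1) × (Torus1 × Torus1) :=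
  (stdMap N m.1 +
      Px (matAct ((A ^ N : Matrix.SpecialLinearGroup (Fin 2) ℤ) : Matrix (Fin 2) (Fin 2) ℤ) m.2),
    matAct ((A ^ (2 * N) : Matrix.SpecialLinearGroup (Fin 2) ℤ) : Matrix (Fin 2) (Fin 2) ℤ) m.2)

/-- The map `(x,y,z,w) ↦ (s_N(x,y) + P_x(A^{-N}(z,w)), A^{-2N}(z,w))`. -/
noncomputable def gBC (N : ℕ) (A : Matrix.SpecialLinearGroup (Fin 2) ℤ)
    (m : (Torus1 × Torus1) × (Torus1 × Torus1)) : (Torus1 × Torus1) × (Torus1 × Torus1) :=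
  (stdMap N m.1 +
      Px (matAct ((A⁻¹ ^ N : Matrix.SpecialLinearGroup (Fin 2) ℤ) : Matrix (Fin 2) (Fin 2) ℤ) m.2),
    matAct ((A⁻¹ ^ (2 * N) : Matrix.SpecialLinearGroup (Fin 2) ℤ) : Matrix (Fin 2) (Fin 2) ℤ) m.2)

/-- The involution `I(x,y,z,w) = (y,x,z,w)`. -/
def invol (m : (Torus1 × Torus1) × (Torus1 × Torus1)) :
    (Torus1 × Torus1) × (Torus1 × Torus1) := ((m.1.2, m.1.1), m.2)

/-! The fibre map of `f_N` over `q` is the standard map translated by `c = P_x(A^N q)`, and it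
factors as `swap ∘ R_c` with `R_c (x, y) = (x, 2x + N sin x + c - y)` an involution; hence its
inverse is `R_c ∘ swap`, which is `I`-conjugate to `swap ∘ R_c`. The inverse of `f_N` lies over
`A^{-2N}` and must undo the translation `c`, and `g` does exactly this, since
`P_x(A^{-N} (A^{2N} q)) = P_x(A^N q)`. -/

lemma involutive_fst_sub_snd {G : Type*} [AddCommGroup G] (F : G → G) :
    Function.Involutive fun p : G × G => (p.1, F p.1 - p.2) :=
  fun p => by simp

def stdReflection (N : ℝ) (c : Torus1) (p : Torus1 × Torus1) : Torus1 × Torus1 :=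
  (p.1, (2 : ℤ) • p.1 + ((N * sinT p.1 : ℝ) : Torus1) + c - p.2)

lemma stdReflection_involutive (N : ℝ) (c : Torus1) : Function.Involutive (stdReflection N c) :=
  involutive_fst_sub_snd fun x => (2 : ℤ) • x + ((N * sinT x : ℝ) : Torus1) + c

lemma stdMap_add_Px (N : ℝ) (p v : Torus1 × Torus1) :
    stdMap N p + Px v = (stdReflection N v.1 p).swap := by
  simp only [stdMap, Px, stdReflection, Prod.swap_prod_mk, Prod.mk_add_mk, add_zero, Prod.mk.injEq,
    and_true]
  abel

lemma matAct_mul (B C : Matrix (Fin 2) (Fin 2) ℤ) (p : Torus1 × Torus1) :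
    matAct (B * C) p = matAct B (matAct C p) := by
  simp only [matAct, Matrix.mul_apply, Fin.sum_univ_two, add_smul, mul_smul, smul_add]
  exact Prod.ext (by module) (by module)

lemma matAct_one (p : Torus1 × Torus1) : matAct 1 p = p := by
  simp [matAct]

lemma matAct_coe_mul (B C : Matrix.SpecialLinearGroup (Fin 2) ℤ) (p : Torus1 × Torus1) :
    matAct ↑(B * C) p = matAct ↑B (matAct ↑C p) := by
  rw [Matrix.SpecialLinearGroup.coe_mul, matAct_mul]

lemma fBC_eq (N : ℕ) (A : Matrix.SpecialLinearGroup (Fin 2) ℤ)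
    (m : (Torus1 × Torus1) × (Torus1 × Torus1)) :
    fBC N A m = ((stdReflection N (matAct ↑(A ^ N) m.2).1 m.1).swap, matAct ↑(A ^ (2 * N)) m.2) := by
  rw [fBC, stdMap_add_Px]

lemma invol_fBC_invol_eq (N : ℕ) (A : Matrix.SpecialLinearGroup (Fin 2) ℤ)
    (m : (Torus1 × Torus1) × (Torus1 × Torus1)) :
    invol (fBC N A (invol m)) =
      (stdReflection N (matAct ↑(A ^ N) m.2).1 m.1.swap, matAct ↑(A ^ (2 * N)) m.2) := by
  rw [invol, fBC_eq]
  rfl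

/-- `f_N⁻¹` is conjugated by the involution `I(x,y,z,w) = (y,x,z,w)` to the map
`(x,y,z,w) ↦ (s_N(x,y) + P_x(A^{-N}(z,w)), A^{-2N}(z,w))`; that is,
`I ∘ g ∘ I` is a two-sided inverse of `f_N`. -/
theorem fBC_inverse_conjugated (N : ℕ) (A : Matrix.SpecialLinearGroup (Fin 2) ℤ) :
    Function.LeftInverse (invol ∘ gBC N A ∘ invol) (fBC N A) ∧
      Function.RightInverse (invol ∘ gBC N A ∘ invol) (fBC N A) := by
  have hf : A⁻¹ ^ N * A ^ (2 * N) = A ^ N := by group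
  have hg : A ^ N * A⁻¹ ^ (2 * N) = A⁻¹ ^ N := by group
  have hfg : A⁻¹ ^ (2 * N) * A ^ (2 * N) = 1 := by group
  have hgf : A ^ (2 * N) * A⁻¹ ^ (2 * N) = 1 := by group
  refine ⟨fun m => ?_, fun m => ?_⟩
  · change invol (fBC N A⁻¹ (invol (fBC N A m))) = m
    rw [invol_fBC_invol_eq, fBC_eq]
    simp only [Prod.swap_swap, ← matAct_coe_mul, hf, hfg, Matrix.SpecialLinearGroup.coe_one,
      matAct_one, stdReflection_involutive N _ m.1]
  · change fBC N A (invol (fBC N A⁻¹ (invol m))) = m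
    rw [fBC_eq, invol_fBC_invol_eq]
    simp only [← matAct_coe_mul, hg, hgf, Matrix.SpecialLinearGroup.coe_one, matAct_one,
      stdReflection_involutive N _ m.1.swap, Prod.swap_swap]

end
end

section
/- For V a one-dimensional subspace of R^2 and θ > 0, let C_θ(V) = {w ∈ R^2 : θ‖w_V‖ ≥ ‖w_{V⊥}‖} be the cone of size θ around V, where w = w_V + w_{V⊥} is the orthogonal decomposition. If V is spanned by a unit vector (x, x/θ_1) with x > 0 (so V lies on the boundary of the horizontal cone of size 1/θ_1, with 0 < θ_1 ≤ 1), then the cone C_{θ_1/2}(V) is contained in the horizontal cone C^{hor}_{(θ_1^2+2)/θ_1}, and in particular in C^{hor}_{4/θ_1}. -/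
/-!
Writing `w = (a, b)`, dividing the cone condition by `x` leaves
`|b - a/θ₁| ≤ (θ₁/2) |a + b/θ₁|`. The triangle inequality on `b = (b - a/θ₁) + a/θ₁` then gives
`|b| ≤ (θ₁/2) |a| + |b|/2 + |a|/θ₁`; since the cone size `θ₁/2` times the slope `1/θ₁` of `V` is
`1/2 < 1`, the `|b|` on the right can be absorbed.
-/

/-- `h` says that `(a, b)` lies in the cone of size `c` around the line through `(1, m)`. -/
lemma one_sub_mul_abs_mul_le_of_abs_sub_mul_le {a b m c : ℝ} (hc : 0 ≤ c)
    (h : |b - m * a| ≤ c * |a + m * b|) : (1 - c * |m|) * |b| ≤ (c + |m|) * |a| := by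
  have hb : |b| ≤ |b - m * a| + |m| * |a| := by
    calc |b| = |(b - m * a) + m * a| := by ring_nf
      _ ≤ |b - m * a| + |m| * |a| := (abs_add_le _ _).trans_eq (by rw [abs_mul])
  have hv : |a + m * b| ≤ |a| + |m| * |b| := (abs_add_le _ _).trans_eq (by rw [abs_mul])
  linarith [mul_le_mul_of_nonneg_left hv hc]

theorem cone_containment_general (θ₁ : ℝ) (h0 : 0 < θ₁) (h1 : θ₁ ≤ 1) (x : ℝ) (hx : 0 < x)
    (w : ℝ × ℝ)
    (hw : |(-(x / θ₁)) * w.1 + x * w.2| ≤ (θ₁ / 2) * |w.1 * x + w.2 * (x / θ₁)|) :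
    |w.2| ≤ ((θ₁ ^ 2 + 2) / θ₁) * |w.1| ∧ |w.2| ≤ (4 / θ₁) * |w.1| := by
  have hcone : |w.2 - θ₁⁻¹ * w.1| ≤ θ₁ / 2 * |w.1 + θ₁⁻¹ * w.2| := by
    have hperp : -(x / θ₁) * w.1 + x * w.2 = x * (w.2 - θ₁⁻¹ * w.1) := by ring
    have hpar : w.1 * x + w.2 * (x / θ₁) = x * (w.1 + θ₁⁻¹ * w.2) := by ring
    rw [hperp, hpar, abs_mul, abs_mul, abs_of_pos hx, mul_left_comm] at hw
    exact le_of_mul_le_mul_left hw hx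
  have hhalf := one_sub_mul_abs_mul_le_of_abs_sub_mul_le (by positivity) hcone
  rw [abs_inv, abs_of_pos h0, show θ₁ / 2 * θ₁⁻¹ = 1 / 2 by field_simp] at hhalf
  have hsharp : |w.2| ≤ (θ₁ ^ 2 + 2) / θ₁ * |w.1| := by
    rw [show (θ₁ ^ 2 + 2) / θ₁ = 2 * (θ₁ / 2 + θ₁⁻¹) by field_simp]
    linarith
  refine ⟨hsharp, hsharp.trans (mul_le_mul_of_nonneg_right ?_ (abs_nonneg _))⟩
  gcongr
  nlinarith

/-- Cones in `ℝ²`: if `V` is spanned by a unit vector `(x, x/θ₁)` with `x > 0`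
(so `V` lies on the boundary of the horizontal cone of size `1/θ₁`, `0 < θ₁ ≤ 1`),
then the cone `C_{θ₁/2}(V) = {w : (θ₁/2)‖proj_V w‖ ≥ ‖proj_{V⊥} w‖}` is contained
in the horizontal cone of size `(θ₁²+2)/θ₁`, and in particular in that of size
`4/θ₁`.  Here `proj_V w = ⟨w, v⟩ v` and `proj_{V⊥} w = ⟨w, v⊥⟩ v⊥` with
`v = (x, x/θ₁)` a unit vector and `v⊥ = (-(x/θ₁), x)`. -/
theorem cone_containment (θ₁ : ℝ) (h0 : 0 < θ₁) (h1 : θ₁ ≤ 1) (x : ℝ) (hx : 0 < x)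
    (hunit : x ^ 2 + (x / θ₁) ^ 2 = 1) (w : ℝ × ℝ)
    (hw : |(-(x / θ₁)) * w.1 + x * w.2| ≤ (θ₁ / 2) * |w.1 * x + w.2 * (x / θ₁)|) :
    |w.2| ≤ ((θ₁ ^ 2 + 2) / θ₁) * |w.1| ∧ |w.2| ≤ (4 / θ₁) * |w.1| :=
  cone_containment_general θ₁ h0 h1 x hx w hw
end
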